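/- arXiv:2104.13177 — 3 statements merged into one kernel-verified Lean document; each statement's English description precedes it below -/
import Mathlib

section
/- Let M ∈ ℝ^{n×n}, and let x, z ∈ ℝⁿ be componentwise nonnegative with x_i z_i = 0 and x_i + z_i > 0 for all i, and set X = diag(x), Z = diag(z). Then the block matrix J = [[M, −I],[Z, X]] is invertible if and only if the matrix J_l = [[M, −I],[φ(Z), φ(X)]] is invertible, where φ applies entrywise the function φ(t) = 1 if t ≠ 0 and φ(t) = 0 if t = 0. -/
theorem block_invertible_iff_indicator (n : ℕ) (M : Matrix (Fin n) (Fin n) ℝ)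
    (x z : Fin n → ℝ) (hx : ∀ i, 0 ≤ x i) (hz : ∀ i, 0 ≤ z i)
    (hcomp : ∀ i, x i * z i = 0) (hstrict : ∀ i, 0 < x i + z i) :
    IsUnit (Matrix.fromBlocks M (-1) (Matrix.diagonal z) (Matrix.diagonal x)) ↔
    IsUnit (Matrix.fromBlocks M (-1)
      (Matrix.diagonal (fun i => if z i = 0 then (0 : ℝ) else 1))
      (Matrix.diagonal (fun i => if x i = 0 then (0 : ℝ) else 1))) := by
  have hd : ∀ i, x i + z i ≠ 0 := fun i => (hstrict i).ne'
  set e : Fin n → ℝ := fun i => (x i + z i)⁻¹ with he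
  have key : Matrix.fromBlocks (1 : Matrix (Fin n) (Fin n) ℝ) 0 0 (Matrix.diagonal e) *
      Matrix.fromBlocks M (-1) (Matrix.diagonal z) (Matrix.diagonal x) =
      Matrix.fromBlocks M (-1)
        (Matrix.diagonal (fun i => if z i = 0 then (0 : ℝ) else 1))
        (Matrix.diagonal (fun i => if x i = 0 then (0 : ℝ) else 1)) := by
    have hZ : (fun i => e i * z i) = (fun i => if z i = 0 then (0:ℝ) else 1) := by
      funext i
      by_cases hzi : z i = 0
      · simp [hzi]
      · have hxi : x i = 0 := (mul_eq_zero.mp (hcomp i)).resolve_right hzi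
        simp [he, hzi, hxi, inv_mul_cancel₀ hzi]
    have hX : (fun i => e i * x i) = (fun i => if x i = 0 then (0:ℝ) else 1) := by
      funext i
      by_cases hxi : x i = 0
      · simp [hxi]
      · have hzi : z i = 0 := (mul_eq_zero.mp (hcomp i)).resolve_left hxi
        simp [he, hzi, hxi, inv_mul_cancel₀ hxi]
    rw [Matrix.fromBlocks_multiply]
    simp only [Matrix.one_mul, Matrix.zero_mul, Matrix.mul_zero, Matrix.diagonal_mul_diagonal,
      add_zero, zero_add, hZ, hX]
  have hdetE : (Matrix.fromBlocks (1 : Matrix (Fin n) (Fin n) ℝ) 0 0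
      (Matrix.diagonal e)).det ≠ 0 := by
    rw [Matrix.det_fromBlocks_zero₂₁, Matrix.det_one, one_mul, Matrix.det_diagonal]
    exact Finset.prod_ne_zero_iff.mpr fun i _ => inv_ne_zero (hd i)
  rw [Matrix.isUnit_iff_isUnit_det, Matrix.isUnit_iff_isUnit_det, ← key, Matrix.det_mul,
    isUnit_iff_ne_zero, isUnit_iff_ne_zero, mul_ne_zero_iff]
  exact ⟨fun h => ⟨hdetE, h⟩, fun h => h.2⟩
end

section
/- Let M ∈ ℝ^{n×n} be a matrix all of whose principal minors are nonzero, and let x, z ∈ ℝⁿ be strictly complementary nonnegative vectors (x_i z_i = 0, x_i + z_i > 0 for all i), X = diag(x), Z = diag(z). Then the block matrix J = [[M, −I],[Z, X]] is invertible. -/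
theorem block_invertible_of_principal_minors (n : ℕ) (M : Matrix (Fin n) (Fin n) ℝ)
    (hM : ∀ s : Finset (Fin n),
      (M.submatrix (fun i : {i // i ∈ s} => (i : Fin n)) (fun i : {i // i ∈ s} => (i : Fin n))).det ≠ 0)
    (x z : Fin n → ℝ) (hx : ∀ i, 0 ≤ x i) (hz : ∀ i, 0 ≤ z i)
    (hcomp : ∀ i, x i * z i = 0) (hstrict : ∀ i, 0 < x i + z i) :
    IsUnit (Matrix.fromBlocks M (-1) (Matrix.diagonal z) (Matrix.diagonal x)) := by
  rw [Matrix.isUnit_iff_isUnit_det, isUnit_iff_ne_zero]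
  intro hdet
  obtain ⟨v, hv, hveq⟩ := (Matrix.exists_mulVec_eq_zero_iff).2 hdet
  set u : Fin n → ℝ := fun i => v (Sum.inl i) with hu
  set w : Fin n → ℝ := fun i => v (Sum.inr i) with hwdef
  have hv' : v = Sum.elim u w := by funext i; cases i <;> rfl
  rw [hv', Matrix.fromBlocks_mulVec] at hveq
  simp only [Sum.elim_comp_inl, Sum.elim_comp_inr] at hveq
  have hw : w = M.mulVec u := by
    funext i
    have h := congrFun hveq (Sum.inl i)
    simp only [Sum.elim_inl, Matrix.neg_mulVec, Matrix.one_mulVec, Pi.add_apply,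
      Pi.neg_apply, Pi.zero_apply] at h
    linarith
  have hB : ∀ i, z i * u i + x i * w i = 0 := by
    intro i
    have h := congrFun hveq (Sum.inr i)
    simpa [Matrix.mulVec_diagonal] using h
  have hu0 : ∀ i, x i = 0 → u i = 0 := by
    intro i hxi
    have hzi : 0 < z i := by have := hstrict i; linarith
    have := hB i
    rw [hxi] at this
    have : z i * u i = 0 := by linarith
    exact (mul_eq_zero.1 this).resolve_left (ne_of_gt hzi)
  have hMu0 : ∀ i, x i ≠ 0 → M.mulVec u i = 0 := by
    intro i hxi
    have hzi : z i = 0 := (mul_eq_zero.1 (hcomp i)).resolve_left hxi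
    have := hB i
    rw [hzi, zero_mul, zero_add] at this
    have hw0 : w i = 0 := (mul_eq_zero.1 this).resolve_left hxi
    rw [← hw, hw0]
  set s : Finset (Fin n) := Finset.univ.filter (fun i => x i ≠ 0) with hs
  have hsub : (M.submatrix (fun i : {i // i ∈ s} => (i : Fin n))
      (fun i : {i // i ∈ s} => (i : Fin n))).mulVec (fun j : {i // i ∈ s} => u j) = 0 := by
    funext j
    have hj : x (j : Fin n) ≠ 0 := (Finset.mem_filter.1 j.2).2
    have key : ∑ k : {i // i ∈ s}, M (j : Fin n) (k : Fin n) * u (k : Fin n)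
        = M.mulVec u (j : Fin n) := by
      rw [Finset.sum_coe_sort s (fun k => M (j : Fin n) k * u k)]
      rw [Matrix.mulVec, dotProduct]
      refine Finset.sum_subset s.subset_univ ?_
      intro k _ hk
      have hxk : x k = 0 := by
        by_contra hxk
        exact hk (by simp [hs, hxk])
      rw [hu0 k hxk, mul_zero]
    simp only [Matrix.mulVec, dotProduct, Matrix.submatrix_apply]
    rw [key]
    · exact hMu0 _ hj
  have husub : (fun j : {i // i ∈ s} => u j) = 0 := by
    by_contra h
    exact hM s ((Matrix.exists_mulVec_eq_zero_iff).1 ⟨_, h, hsub⟩)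
  have huz : u = 0 := by
    funext i
    by_cases hxi : x i = 0
    · exact hu0 i hxi
    · have hi : i ∈ s := by simp [hs, hxi]
      exact congrFun husub ⟨i, hi⟩
  have hwz : w = 0 := by rw [hw, huz, Matrix.mulVec_zero]
  apply hv
  rw [hv', huz, hwz]
  funext i; cases i <;> rfl
end

section
/- Let I ⊆ {1,…,n}, M ∈ ℝ^{n×n}, and consider the (2n)×(2n) block matrix J_l = [[M, −I_n],[D_Z, D_X]] where D_Z is the diagonal 0-1 matrix with (D_Z)_{ii} = 1 iff i ∈ I, and D_X the diagonal 0-1 matrix with (D_X)_{ii} = 1 iff i ∉ I. Then det(J_l) = ± det(M_{I^c}), where M_{I^c} is the principal submatrix of M indexed by the complement of I. In particular |det(J_l)| = |det(M_{I^c})|. -/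
theorem det_block_indicator (n : ℕ) (M : Matrix (Fin n) (Fin n) ℝ) (I : Finset (Fin n)) :
    ((Matrix.fromBlocks M (-1)
        (Matrix.diagonal (fun i => if i ∈ I then (1 : ℝ) else 0))
        (Matrix.diagonal (fun i => if i ∈ I then (0 : ℝ) else 1))).det =
      (M.submatrix (fun i : {i // i ∈ Iᶜ} => (i : Fin n))
        (fun i : {i // i ∈ Iᶜ} => (i : Fin n))).det ∨
     (Matrix.fromBlocks M (-1)
        (Matrix.diagonal (fun i => if i ∈ I then (1 : ℝ) else 0))
        (Matrix.diagonal (fun i => if i ∈ I then (0 : ℝ) else 1))).det =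
      -(M.submatrix (fun i : {i // i ∈ Iᶜ} => (i : Fin n))
        (fun i : {i // i ∈ Iᶜ} => (i : Fin n))).det) ∧
    |(Matrix.fromBlocks M (-1)
        (Matrix.diagonal (fun i => if i ∈ I then (1 : ℝ) else 0))
        (Matrix.diagonal (fun i => if i ∈ I then (0 : ℝ) else 1))).det| =
      |(M.submatrix (fun i : {i // i ∈ Iᶜ} => (i : Fin n))
        (fun i : {i // i ∈ Iᶜ} => (i : Fin n))).det| := by
  classical
  set dz : Matrix (Fin n) (Fin n) ℝ :=
    Matrix.diagonal (fun i => if i ∈ I then (1 : ℝ) else 0) with hdz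
  set dx : Matrix (Fin n) (Fin n) ℝ :=
    Matrix.diagonal (fun i => if i ∈ I then (0 : ℝ) else 1) with hdx
  set J : Matrix (Fin n ⊕ Fin n) (Fin n ⊕ Fin n) ℝ := Matrix.fromBlocks M (-1) dz dx with hJ
  set N : Matrix (Fin n) (Fin n) ℝ := dz + dx * M with hN
  set Msub : Matrix {i // i ∈ Iᶜ} {i // i ∈ Iᶜ} ℝ :=
    M.submatrix (fun i : {i // i ∈ Iᶜ} => (i : Fin n))
      (fun i : {i // i ∈ Iᶜ} => (i : Fin n)) with hMsub
  -- Step 1: det N = det Msub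
  have hND : N.det = Msub.det := by
    let e : {i // i ∈ I} ⊕ {i // i ∈ Iᶜ} ≃ Fin n :=
      (Equiv.sumCongr (Equiv.refl _)
        (Equiv.subtypeEquivRight (fun i => Finset.mem_compl))).trans
        (Equiv.sumCompl (fun i => i ∈ I))
    have hsub : N.submatrix e e =
        Matrix.fromBlocks 1 0
          (M.submatrix (fun i : {i // i ∈ Iᶜ} => (i : Fin n))
            (fun i : {i // i ∈ I} => (i : Fin n))) Msub := by
      ext i j
      have he : ∀ x : {i // i ∈ I} ⊕ {i // i ∈ Iᶜ}, e x = Sum.elim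
          (fun a : {i // i ∈ I} => (a : Fin n)) (fun a : {i // i ∈ Iᶜ} => (a : Fin n)) x := by
        rintro (a | a) <;> rfl
      rcases i with i | i <;> rcases j with j | j
      · have hi := i.2
        have hiff : ((i : Fin n) = (j : Fin n)) ↔ i = j := by
          constructor <;> intro h
          · exact Subtype.ext h
          · exact congrArg _ h
        simp [he, hN, hdz, hdx, Matrix.add_apply, Matrix.diagonal_mul, Matrix.diagonal_apply,
          Matrix.one_apply, hi, hiff]
      · have hij : (i : Fin n) ≠ (j : Fin n) := by
          intro h
          exact (Finset.mem_compl.mp j.2) (h ▸ i.2)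
        simp [he, hN, hdz, hdx, Matrix.add_apply, Matrix.diagonal_mul, Matrix.diagonal_apply, i.2, hij]
      · have hij : (i : Fin n) ≠ (j : Fin n) := by
          intro h
          exact (Finset.mem_compl.mp i.2) (h ▸ j.2)
        simp [he, hN, hdz, hdx, Matrix.add_apply, Matrix.diagonal_mul, Matrix.diagonal_apply,
          Finset.mem_compl.mp i.2, hij]
      · simp [he, hN, hdz, hdx, hMsub, Matrix.add_apply, Matrix.diagonal_mul, Matrix.diagonal_apply,
          Finset.mem_compl.mp i.2]
    calc N.det = (N.submatrix e e).det := (Matrix.det_submatrix_equiv_self e N).symm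
      _ = Msub.det := by rw [hsub, Matrix.det_fromBlocks_zero₁₂, Matrix.det_one, one_mul]
  -- Step 2: relate det J to det N up to sign
  haveI : Invertible (1 : Matrix (Fin n) (Fin n) ℝ) := invertibleOne
  haveI : Invertible (-1 : Matrix (Fin n) (Fin n) ℝ) := invertibleNeg 1
  have hswap : (Matrix.fromBlocks (-1) M dx dz).det =
      (Equiv.Perm.sign (Equiv.sumComm (Fin n) (Fin n)) : ℝ) * J.det := by
    have := Matrix.det_permute' (Equiv.sumComm (Fin n) (Fin n)) J
    have h2 : J.submatrix id (Equiv.sumComm (Fin n) (Fin n)) =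
        Matrix.fromBlocks (-1) M dx dz := by
      have : ⇑(Equiv.sumComm (Fin n) (Fin n)) = Sum.swap := rfl
      rw [hJ, this, Matrix.fromBlocks_submatrix_sum_swap_right, Matrix.submatrix_id_id]
    rw [h2] at this
    exact_mod_cast this
  have hschur : (Matrix.fromBlocks (-1) M dx dz).det =
      (-1 : ℝ) ^ n * N.det := by
    rw [Matrix.det_fromBlocks₁₁]
    congr 1
    · simp [Matrix.det_neg]
    · congr 1
      have h1 : ⅟(-1 : Matrix (Fin n) (Fin n) ℝ) = -1 := by
        have := invOf_neg (1 : Matrix (Fin n) (Fin n) ℝ)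
        simpa using this
      rw [h1, hN]
      noncomm_ring
  set s : ℝ := (Equiv.Perm.sign (Equiv.sumComm (Fin n) (Fin n)) : ℝ) with hs
  have hs2 : s = 1 ∨ s = -1 := by
    rcases Int.units_eq_one_or (Equiv.Perm.sign (Equiv.sumComm (Fin n) (Fin n))) with h | h <;>
      simp [hs, h]
  have hJdet : J.det = s * ((-1 : ℝ) ^ n * Msub.det) := by
    have hss : s * s = 1 := by rcases hs2 with h | h <;> rw [h] <;> ring
    have : s * J.det = (-1 : ℝ) ^ n * Msub.det := by rw [← hswap, hschur, hND]
    calc J.det = (s * s) * J.det := by rw [hss, one_mul]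
      _ = s * (s * J.det) := by ring
      _ = s * ((-1 : ℝ) ^ n * Msub.det) := by rw [this]
  have habs : |J.det| = |Msub.det| := by
    rw [hJdet, abs_mul, abs_mul, abs_pow, abs_neg, abs_one, one_pow, one_mul]
    rcases hs2 with h | h <;> simp [h]
  refine ⟨?_, habs⟩
  rcases hs2 with h | h <;> rcases Nat.even_or_odd n with hn | hn
  · left; rw [hJdet, h, hn.neg_one_pow]; ring
  · right; rw [hJdet, h, hn.neg_one_pow]; ring
  · right; rw [hJdet, h, hn.neg_one_pow]; ring
  · left; rw [hJdet, h, hn.neg_one_pow]; ring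
end
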